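/- Let G be a pro-torus acting effectively and continuously on a Hausdorff space X, and let N be a totally disconnected closed subgroup of G. Then there is an induced continuous action of G/N on the orbit space X/N, the orbit projection X → X/N restricts to a homeomorphism from the fixed point set X^G onto the fixed point set (X/N)^{G/N}, and the orbit space of the G/N-action on X/N is homeomorphic to the orbit space X/G. -/

import Mathlib

/-!
Common infrastructure: an abstract rational (sheaf) cohomology theory, Poincaré
duality spaces, orbit spaces, pro-tori, and Borel constructions.
-/

noncomputable section

open MulAction CategoryTheory

/-- An abstract contravariant graded rational cohomology theory on topological spaces
(standing for sheaf cohomology with rational coefficients): to every topological space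
it assigns a graded `ℚ`-algebra (the total cohomology ring, with `deg X n` playing the
role of `H^n(X, ℚ)`), contravariantly functorial in continuous maps. -/
structure GradedCohomology : Type 1 where
  /-- the total cohomology algebra `H^*(X, ℚ)` -/
  H : (X : Type) → [TopologicalSpace X] → AlgCat.{0} ℚ
  /-- the degree `n` part `H^n(X, ℚ)` -/
  deg : (X : Type) → [TopologicalSpace X] → ℕ → Submodule ℚ (H X)
  /-- the total cohomology is the internal direct sum of its graded pieces -/
  isInternal : ∀ (X : Type) [TopologicalSpace X], DirectSum.IsInternal (deg X)
  one_mem : ∀ (X : Type) [TopologicalSpace X], (1 : H X) ∈ deg X 0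
  mul_mem : ∀ (X : Type) [TopologicalSpace X] {p q : ℕ} {a b : H X},
      a ∈ deg X p → b ∈ deg X q → a * b ∈ deg X (p + q)
  /-- pullback `f^* : H^*(Y, ℚ) → H^*(X, ℚ)` along a continuous map `f : X → Y` -/
  map : ∀ {X Y : Type} [TopologicalSpace X] [TopologicalSpace Y], C(X, Y) → (H Y ⟶ H X)
  map_id : ∀ (X : Type) [TopologicalSpace X], map (ContinuousMap.id X) = 𝟙 (H X)
  map_comp : ∀ {X Y Z : Type} [TopologicalSpace X] [TopologicalSpace Y] [TopologicalSpace Z]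
      (f : C(X, Y)) (g : C(Y, Z)), map (g.comp f) = map g ≫ map f
  map_deg : ∀ {X Y : Type} [TopologicalSpace X] [TopologicalSpace Y] (f : C(X, Y)) (n : ℕ)
      {a : H Y}, a ∈ deg Y n → map f a ∈ deg X n

namespace GradedCohomology

variable (T : GradedCohomology)

/-- `X` is a Poincaré duality space over `ℚ` of formal dimension `n`: a connected
Hausdorff space with finite dimensional total rational cohomology, vanishing above
degree `n > 0`, with `H^n(X, ℚ) ≅ ℚ` and the cup-product pairing
`H^p(X, ℚ) ⊗ H^{n-p}(X, ℚ) → H^n(X, ℚ) = ℚ` nonsingular. -/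
def IsPD (X : Type) [TopologicalSpace X] (n : ℕ) : Prop :=
  ConnectedSpace X ∧ T2Space X ∧ 0 < n ∧ FiniteDimensional ℚ (T.H X) ∧
  Module.finrank ℚ (T.deg X n) = 1 ∧
  (∀ i : ℕ, n < i → T.deg X i = ⊥) ∧
  ∀ p q : ℕ, p + q = n →
    (∀ a ∈ T.deg X p, a ≠ 0 → ∃ b ∈ T.deg X q, a * b ≠ 0) ∧
    (∀ b ∈ T.deg X q, b ≠ 0 → ∃ a ∈ T.deg X p, a * b ≠ 0)

open Classical in
/-- The formal dimension `fd(X)` of a Poincaré duality space (`0` if `X` is not one). -/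
def fd (X : Type) [TopologicalSpace X] : ℕ :=
  if h : ∃ n, T.IsPD X n then h.choose else 0

end GradedCohomology

/-- The orbit space `X/G` of a group action, with the quotient topology. -/
abbrev OrbitSpace (G X : Type) [Group G] [MulAction G X] [TopologicalSpace X] : Type :=
  Quotient (orbitRel G X)

/-- The orbit projection `X → X/G` as a continuous map. -/
def orbitProj (G X : Type) [Group G] [MulAction G X] [TopologicalSpace X] :
    C(X, OrbitSpace G X) :=
  ⟨Quotient.mk _, continuous_quotient_mk'⟩

/-- Multiplication by a fixed group element, as a continuous self-map. -/
def smulCMap {G : Type} (X : Type) [Group G] [TopologicalSpace G] [TopologicalSpace X]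
    [MulAction G X] [ContinuousSMul G X] (g : G) : C(X, X) :=
  ⟨fun x => g • x, continuous_const_smul g⟩

/-- A `G`-invariant subset of a `G`-space is itself a `G`-space. -/
def Set.invariantMulAction {G X : Type} [Monoid G] [MulAction G X] (s : Set X)
    (hs : ∀ (g : G), ∀ x ∈ s, g • x ∈ s) : MulAction G s where
  smul g x := ⟨g • (x : X), hs g x x.2⟩
  one_smul x := Subtype.ext (one_smul G (x : X))
  mul_smul g h x := Subtype.ext (mul_smul g h (x : X))

section QuotAction

variable {G : Type} [CommGroup G] {X : Type} [MulAction G X] [TopologicalSpace X]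
  (N : Subgroup G)

/-- The induced action of `G/N` on the orbit space `X/N` (for abelian `G`). -/
instance OrbitSpace.quotMulAction : MulAction (G ⧸ N) (OrbitSpace N X) where
  smul g x := Quotient.liftOn₂ g x (fun g x => Quotient.mk _ (g • x)) (by
    intro g₁ x₁ g₂ x₂ hg hx
    apply Quotient.sound
    replace hg : g₁⁻¹ * g₂ ∈ N := QuotientGroup.leftRel_apply.mp hg
    replace hx : x₁ ∈ orbit (↥N) x₂ := hx
    obtain ⟨m, hm⟩ := mem_orbit_iff.mp hx
    show g₁ • x₁ ∈ orbit (↥N) (g₂ • x₂)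
    refine mem_orbit_iff.mpr ⟨⟨(m : G) * (g₁⁻¹ * g₂)⁻¹, mul_mem m.2 (inv_mem hg)⟩, ?_⟩
    have hm' : (m : G) • x₂ = x₁ := hm
    show ((m : G) * (g₁⁻¹ * g₂)⁻¹) • g₂ • x₂ = g₁ • x₁
    rw [← hm', ← mul_smul, ← mul_smul]
    congr 1
    simp [mul_inv_rev, mul_comm, mul_left_comm, mul_assoc])
  one_smul := by
    rintro ⟨x⟩
    exact congrArg (Quotient.mk _) (one_smul G x)
  mul_smul := by
    rintro ⟨g⟩ ⟨h⟩ ⟨x⟩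
    exact congrArg (Quotient.mk _) (mul_smul g h x)

@[simp] theorem OrbitSpace.quot_smul_mk (g : G) (x : X) :
    (QuotientGroup.mk g : G ⧸ N) • (Quotient.mk _ x : OrbitSpace N X)
      = Quotient.mk _ (g • x) := rfl

end QuotAction

section Borel

variable (G : Type) [Group G]

/-- The Borel construction `X_G = (X × E)/G` (with the diagonal action). -/
abbrev BorelConstruction (X E : Type) [TopologicalSpace X] [TopologicalSpace E]
    [MulAction G X] [MulAction G E] : Type :=
  OrbitSpace G (X × E)

/-- The projection `X_G → B_G = E/G` of the Borel fibration. -/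
def borelProj (X E : Type) [TopologicalSpace X] [TopologicalSpace E]
    [MulAction G X] [MulAction G E] :
    C(BorelConstruction G X E, OrbitSpace G E) :=
  ⟨Quotient.map' Prod.snd (by
      rintro ⟨x₁, e₁⟩ ⟨x₂, e₂⟩ ⟨g, hg⟩
      exact ⟨g, congrArg Prod.snd hg⟩),
    Continuous.quotient_map' continuous_snd _⟩

/-- The inclusion of the fiber `X → X_G`, `x ↦ [(x, e₀)]`. -/
def borelFiberIncl (X E : Type) [TopologicalSpace X] [TopologicalSpace E]
    [MulAction G X] [MulAction G E] (e₀ : E) :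
    C(X, BorelConstruction G X E) :=
  ⟨fun x => Quotient.mk _ (x, e₀), continuous_quotient_mk'.comp
    (continuous_id.prodMk continuous_const)⟩

/-- The map `X_G → Y_G` induced by a `G`-equivariant continuous map `X → Y`. -/
def borelMapCMap {X Y E : Type} [TopologicalSpace X] [TopologicalSpace Y] [TopologicalSpace E]
    [MulAction G X] [MulAction G Y] [MulAction G E] (f : C(X, Y))
    (hf : ∀ (g : G) (x : X), f (g • x) = g • f x) :
    C(BorelConstruction G X E, BorelConstruction G Y E) :=
  ⟨Quotient.map' (fun p => (f p.1, p.2)) (by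
      rintro ⟨x₁, e₁⟩ ⟨x₂, e₂⟩ ⟨g, hg⟩
      refine ⟨g, ?_⟩
      obtain ⟨h₁, h₂⟩ := Prod.mk.injEq .. ▸ hg
      simp only [Prod.smul_mk, Prod.mk.injEq]
      exact ⟨by rw [← h₁, hf], h₂⟩),
    Continuous.quotient_map' ((f.continuous.comp continuous_fst).prodMk continuous_snd) _⟩

/-- If `G` acts trivially on `S`, the Borel construction `S_G` maps canonically to
the product `S × B_G`; this is the canonical identification used to regard
`H_G^*(S)` as `H^*(B_G) ⊗ H^*(S)`. -/
def borelToProd (S E : Type) [TopologicalSpace S] [TopologicalSpace E]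
    [MulAction G S] [MulAction G E] (hS : ∀ (g : G) (s : S), g • s = s) :
    C(BorelConstruction G S E, S × OrbitSpace G E) :=
  ⟨Quotient.lift (fun p => (p.1, Quotient.mk _ p.2)) (by
      rintro ⟨s₁, e₁⟩ ⟨s₂, e₂⟩ ⟨g, hg⟩
      obtain ⟨h₁, h₂⟩ := Prod.mk.injEq .. ▸ hg
      refine Prod.ext ?_ (Quotient.sound ⟨g, h₂⟩)
      simpa [hS] using h₁.symm),
    Continuous.quotient_lift (continuous_fst.prodMk
      (continuous_quotient_mk'.comp continuous_snd)) _⟩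

/-- The map `B_G → B_{G/N}` induced by a `π`-equivariant map `E → E'` of universal
spaces, where `π : G → G/N` is the canonical projection. -/
def classifyingMap (N : Subgroup G) [N.Normal] {E E' : Type}
    [TopologicalSpace E] [TopologicalSpace E'] [MulAction G E] [MulAction (G ⧸ N) E']
    (φ : C(E, E')) (hφ : ∀ (g : G) (e : E), φ (g • e) = (QuotientGroup.mk g : G ⧸ N) • φ e) :
    C(OrbitSpace G E, OrbitSpace (G ⧸ N) E') :=
  ⟨Quotient.map' φ (by
      rintro e₁ e₂ ⟨g, hg⟩
      exact ⟨QuotientGroup.mk g, by rw [← hg, hφ]⟩),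
    Continuous.quotient_map' φ.continuous _⟩

/-- `E` is (a model for) the total space of the universal principal `G`-bundle:
a contractible space with a free (continuous) `G`-action. -/
def IsUniversalBundle (E : Type) [TopologicalSpace E] [MulAction G E] : Prop :=
  ContractibleSpace E ∧ ∀ (g : G) (e : E), g • e = e → g = 1

/-- `X` is totally nonhomologous to zero in the fibration `X_G → B_G` (w.r.t. the
cohomology theory `T`): the fiber inclusion induces a surjection `H_G^*(X) → H^*(X)`. -/
def GradedCohomology.TNHZ (T : GradedCohomology) (X E : Type) [TopologicalSpace X]
    [TopologicalSpace E] [MulAction G X] [MulAction G E] : Prop :=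
  ∀ e₀ : E, Function.Surjective (T.map (borelFiberIncl G X E e₀))

/-- The class `a ⊗ f₁ ∈ H^*(B_G) ⊗ H^*(S) = H_G^*(S)` for a trivial `G`-space `S`. -/
def GradedCohomology.tensorClass (T : GradedCohomology) {S E : Type} [TopologicalSpace S]
    [TopologicalSpace E] [MulAction G S] [MulAction G E] (hS : ∀ (g : G) (s : S), g • s = s)
    (a : T.H (OrbitSpace G E)) (f₁ : T.H S) : T.H (BorelConstruction G S E) :=
  T.map (borelToProd G S E hS)
    (T.map ⟨Prod.snd, continuous_snd⟩ a * T.map ⟨Prod.fst, continuous_fst⟩ f₁)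

end Borel

section ProTorus

/-- Two topological groups are isomorphic (as topological groups). -/
def IsomorphicTopGroups (A B : Type) [Group A] [Group B] [TopologicalSpace A]
    [TopologicalSpace B] : Prop :=
  ∃ e : A ≃* B, Continuous e ∧ Continuous e.symm

/-- The `k`-dimensional torus `T^k`. -/
abbrev Torus (k : ℕ) : Type := Fin k → Circle

/-- A compact connected abelian group `G` is a `k`-dimensional pro-torus if it has a
totally disconnected closed subgroup `N` with `G/N ≅ T^k`. -/
def IsProTorusOfDim (G : Type) [CommGroup G] [TopologicalSpace G] (k : ℕ) : Prop :=
  ∃ N : Subgroup G, IsClosed (N : Set G) ∧ TotallyDisconnectedSpace N ∧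
    IsomorphicTopGroups (G ⧸ N) (Torus k)

/-- `H` is a closed connected codimension-one subgroup of the pro-torus `G`:
the quotient `G/H` is a one-dimensional pro-torus. -/
def IsCodimOneSubgroup (G : Type) [CommGroup G] [TopologicalSpace G] (H : Subgroup G) : Prop :=
  IsClosed (H : Set G) ∧ IsConnected (H : Set G) ∧
  ∃ M : Subgroup (G ⧸ H), IsClosed (M : Set (G ⧸ H)) ∧ TotallyDisconnectedSpace M ∧
    IsomorphicTopGroups ((G ⧸ H) ⧸ M) Circle

end ProTorus

section AuxKeyFixed

open Pointwise in


private lemma key_fixed {G : Type} [CommGroup G] [TopologicalSpace G] [IsTopologicalGroup G]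
    [CompactSpace G] [ConnectedSpace G]
    {X : Type} [TopologicalSpace X] [T2Space X] [MulAction G X] [ContinuousSMul G X]
    (N : Subgroup G) (hNcl : IsClosed (N : Set G)) [TotallyDisconnectedSpace N]
    {x : X} (hx : ∀ g : G, ∃ n : N, (n : G) • x = g • x) : ∀ g : G, g • x = x := by
  intro g
  by_contra hgx
  obtain ⟨n₀, hn₀⟩ := hx g
  haveI : CompactSpace ↥N := isCompact_iff_compactSpace.mp hNcl.isCompact
  haveI : T2Space ↥N := IsTopologicalGroup.t2Space_iff_one_closed.mpr isClosed_singleton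
  set φ : ↥N → X := fun n => (n : G) • x with hφ
  have hφcont : Continuous φ := continuous_subtype_val.smul continuous_const
  set H : Subgroup ↥N := MulAction.stabilizer ↥N x with hH
  have hHcl : IsClosed (H : Set ↥N) := by
    have : (H : Set ↥N) = φ ⁻¹' {x} := by
      ext n
      simp [hH, MulAction.mem_stabilizer_iff, Subgroup.smul_def, hφ]
    rw [this]
    exact isClosed_singleton.preimage hφcont
  have hn₀H : n₀ ∉ H := by
    intro h
    exact hgx (hn₀ ▸ (MulAction.mem_stabilizer_iff.mp h : (n₀ : G) • x = x))
  have h1C : (1 : ↥N) ∉ n₀ • (H : Set ↥N) := by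
    rintro ⟨h, hh, heq⟩
    apply hn₀H
    have : n₀ = h⁻¹ := by
      rw [eq_inv_iff_mul_eq_one]; exact heq
    rw [this]; exact inv_mem hh
  have hCopen : IsOpen (n₀ • (H : Set ↥N))ᶜ := (hHcl.smul n₀).isOpen_compl
  obtain ⟨W, hWclopen, h1W, hWU⟩ := compact_exists_isClopen_in_isOpen hCopen h1C
  obtain ⟨V, hV⟩ := IsTopologicalGroup.exist_openSubgroup_sub_clopen_nhds_of_one hWclopen h1W
  set L : Subgroup ↥N := V.toSubgroup ⊔ H with hL
  have hLopen : IsOpen (L : Set ↥N) := Subgroup.isOpen_mono le_sup_left V.isOpen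
  have hLclosed : IsClosed (L : Set ↥N) := Subgroup.isClosed_of_isOpen _ hLopen
  have hHle : H ≤ L := le_sup_right
  have hn₀L : n₀ ∉ L := by
    intro hmem
    have : (n₀ : ↥N) ∈ (V.toSubgroup : Set ↥N) * (H : Set ↥N) := by
      rw [← Subgroup.mul_normal]; exact hmem
    obtain ⟨v, hv, h, hh, hvh⟩ := this
    have : v ∈ n₀ • (H : Set ↥N) := ⟨h⁻¹, inv_mem hh, by
      show n₀ • h⁻¹ = v
      rw [smul_eq_mul, ← hvh]
      simp [mul_assoc]⟩
    exact (hWU (hV hv)) this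
  set K : Set ↥N := n₀ • (L : Set ↥N) with hK
  have hKclosed : IsClosed K := hLclosed.smul n₀
  have hKopen : IsOpen K := hLopen.smul n₀
  set A : Set X := φ '' K with hA
  set B : Set X := φ '' Kᶜ with hB
  have hAclosed : IsClosed A := (hKclosed.isCompact.image hφcont).isClosed
  have hBclosed : IsClosed B := ((hKopen.isClosed_compl).isCompact.image hφcont).isClosed
  set S : Set X := Set.range (fun g : G => g • x) with hS
  have hScon : IsPreconnected S :=
    isPreconnected_range (continuous_id.smul continuous_const)
  have hSsub : S ⊆ A ∪ B := by
    rintro _ ⟨g', rfl⟩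
    obtain ⟨n', hn'⟩ := hx g'
    by_cases hc : n' ∈ K
    · exact Or.inl ⟨n', hc, hn'⟩
    · exact Or.inr ⟨n', hc, hn'⟩
  have hgA : g • x ∈ S ∩ A :=
    ⟨⟨g, rfl⟩, ⟨n₀, ⟨1, one_mem L, mul_one n₀⟩, hn₀⟩⟩
  have hxB : x ∈ S ∩ B := by
    refine ⟨⟨1, one_smul G x⟩, ⟨1, ?_, one_smul G x⟩⟩
    rintro ⟨l, hl, heq⟩
    apply hn₀L
    have : n₀ = l⁻¹ := by rw [eq_inv_iff_mul_eq_one]; exact heq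
    rw [this]; exact inv_mem hl
  obtain ⟨y, -, ⟨m, hm, rfl⟩, m', hm', hmeq⟩ :=
    isPreconnected_closed_iff.mp hScon A B hAclosed hBclosed hSsub ⟨_, hgA⟩ ⟨_, hxB⟩
  -- y = φ m with m ∈ K, and y = φ m' with m' ∉ K : contradiction
  apply hm'
  have hstab : m⁻¹ * m' ∈ H := by
    rw [hH, MulAction.mem_stabilizer_iff, Subgroup.smul_def]
    have : (m' : G) • x = (m : G) • x := hmeq
    push_cast [mul_smul]
    rw [this, ← mul_smul]
    simp
  obtain ⟨l, hl, rfl⟩ := hm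
  refine ⟨l * ((n₀ * l)⁻¹ * m'), mul_mem hl (hHle hstab), ?_⟩
  show n₀ * (l * ((n₀ * l)⁻¹ * m')) = m'
  group

end AuxKeyFixed

/-- Let `G` be a pro-torus (compact connected abelian topological group)
acting effectively and continuously on a Hausdorff space `X`, and let `N` be a totally
disconnected closed subgroup of `G`. Then the induced action of `G/N` on the orbit space
`X/N` is continuous, the orbit projection restricts to a homeomorphism
`X^G ≈ (X/N)^{G/N}`, and the orbit space of the `G/N`-action on `X/N` is homeomorphic
to `X/G`. -/
theorem proTorus_quotient_action_properties
    (G : Type) [CommGroup G] [TopologicalSpace G] [IsTopologicalGroup G]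
    [CompactSpace G] [ConnectedSpace G]
    (X : Type) [TopologicalSpace X] [T2Space X] [MulAction G X] [ContinuousSMul G X]
    (heff : ∀ g : G, (∀ x : X, g • x = x) → g = 1)
    (N : Subgroup G) (hNcl : IsClosed (N : Set G)) [TotallyDisconnectedSpace N] :
    Continuous (fun p : (G ⧸ N) × OrbitSpace (↥N) X => p.1 • p.2) ∧
    (∃ h : MulAction.fixedPoints G X ≃ₜ
        MulAction.fixedPoints (G ⧸ N) (OrbitSpace (↥N) X),
      ∀ x : MulAction.fixedPoints G X,
        (h x : OrbitSpace (↥N) X) = Quotient.mk _ (x : X)) ∧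
    Nonempty (OrbitSpace (G ⧸ N) (OrbitSpace (↥N) X) ≃ₜ OrbitSpace G X) := by
  haveI : ContinuousSMul ↥N X :=
    ⟨(continuous_subtype_val.comp continuous_fst).smul continuous_snd⟩
  have hπ2 : IsOpenQuotientMap (Quotient.mk (orbitRel ↥N X)) :=
    MulAction.isOpenQuotientMap_quotientMk
  have hπ1 : IsOpenQuotientMap (QuotientGroup.mk : G → G ⧸ N) :=
    QuotientGroup.isOpenQuotientMap_mk
  have key : ∀ x : X,
      (∀ q : G ⧸ N, q • (Quotient.mk (orbitRel ↥N X) x) = Quotient.mk _ x) →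
      ∀ g : G, g • x = x := by
    intro x hq g
    refine key_fixed N hNcl ?_ g
    intro g'
    have h1 := hq (QuotientGroup.mk g')
    rw [OrbitSpace.quot_smul_mk] at h1
    obtain ⟨n, hn⟩ := Quotient.exact h1
    exact ⟨n, hn⟩
  have fwd : ∀ x : X, x ∈ fixedPoints G X →
      (Quotient.mk (orbitRel ↥N X) x) ∈ fixedPoints (G ⧸ N) (OrbitSpace ↥N X) := by
    intro x hxf
    rw [mem_fixedPoints]
    intro q
    induction q using QuotientGroup.induction_on with
    | H g => rw [OrbitSpace.quot_smul_mk, mem_fixedPoints.mp hxf g]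
  have bwd : ∀ x : X,
      (Quotient.mk (orbitRel ↥N X) x) ∈ fixedPoints (G ⧸ N) (OrbitSpace ↥N X) →
      x ∈ fixedPoints G X := by
    intro x hxf
    rw [mem_fixedPoints]
    exact key x (fun q => mem_fixedPoints.mp hxf q)
  refine ⟨?_, ?_, ?_⟩
  · rw [← (hπ1.prodMap hπ2).continuous_comp_iff]
    exact continuous_quotient_mk'.comp continuous_smul
  · -- the fixed point homeomorphism
    set f : fixedPoints G X → fixedPoints (G ⧸ N) (OrbitSpace ↥N X) :=
      fun x => ⟨Quotient.mk _ (x : X), fwd x x.2⟩ with hf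
    have hfcont : Continuous f :=
      Continuous.subtype_mk (continuous_quotient_mk'.comp continuous_subtype_val) _
    have hfinj : Function.Injective f := by
      rintro ⟨x, hx⟩ ⟨y, hy⟩ hxy
      have h1 : Quotient.mk (orbitRel ↥N X) x = Quotient.mk _ y :=
        congrArg Subtype.val hxy
      obtain ⟨n, hn⟩ := Quotient.exact h1
      have h2 : (n : G) • y = y := mem_fixedPoints.mp hy (n : G)
      have h3 : (n : G) • y = x := hn
      exact Subtype.ext (show x = y by rw [← h3]; exact h2)
    have hfsurj : Function.Surjective f := by
      rintro ⟨q, hq⟩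
      obtain ⟨x, rfl⟩ := Quotient.exists_rep q
      exact ⟨⟨x, bwd x hq⟩, rfl⟩
    have hfopen : IsOpenMap f := by
      intro U hU
      obtain ⟨V, hV, rfl⟩ := isOpen_induced_iff.mp hU
      have himg : f '' (Subtype.val ⁻¹' V)
          = Subtype.val ⁻¹' (Quotient.mk (orbitRel ↥N X) '' V) := by
        ext ⟨q, hq⟩
        constructor
        · rintro ⟨⟨x, hx⟩, hxV, heq⟩
          exact ⟨x, hxV, congrArg Subtype.val heq⟩
        · rintro ⟨x, hxV, hxq⟩
          refine ⟨⟨x, bwd x ?_⟩, hxV, Subtype.ext hxq⟩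
          rw [hxq]; exact hq
      rw [himg]
      exact (hπ2.isOpenMap V hV).preimage continuous_subtype_val
    exact ⟨Equiv.toHomeomorphOfContinuousOpen
      (Equiv.ofBijective f ⟨hfinj, hfsurj⟩) hfcont hfopen, fun x => rfl⟩
  · -- orbit space homeomorphism
    have innerh : ∀ a b : X, (orbitRel ↥N X).r a b →
        Quotient.mk (orbitRel G X) a = Quotient.mk (orbitRel G X) b := by
      rintro a b ⟨n, hn⟩
      exact Quotient.sound ⟨(n : G), hn⟩
    set inner : OrbitSpace ↥N X → OrbitSpace G X :=
      Quotient.lift (Quotient.mk (orbitRel G X)) innerh with hinner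
    have outerh : ∀ p q : OrbitSpace ↥N X,
        (orbitRel (G ⧸ N) (OrbitSpace ↥N X)).r p q → inner p = inner q := by
      rintro p q ⟨gbar, rfl⟩
      induction gbar using QuotientGroup.induction_on with
    | H g =>
        induction q using Quotient.inductionOn with
      | h x => exact Quotient.sound ⟨g, rfl⟩
    set Φ : OrbitSpace (G ⧸ N) (OrbitSpace ↥N X) → OrbitSpace G X :=
      Quotient.lift inner outerh with hΦ
    have Ψh : ∀ a b : X, (orbitRel G X).r a b →
        (Quotient.mk (orbitRel (G ⧸ N) (OrbitSpace ↥N X))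
            (Quotient.mk (orbitRel ↥N X) a))
          = Quotient.mk _ (Quotient.mk _ b) := by
      rintro a b ⟨g, hg⟩
      refine Quotient.sound ⟨QuotientGroup.mk g, ?_⟩
      show (QuotientGroup.mk g : G ⧸ N) • (Quotient.mk (orbitRel ↥N X) b)
        = Quotient.mk (orbitRel ↥N X) a
      rw [OrbitSpace.quot_smul_mk]
      exact congrArg _ hg
    set Ψ : OrbitSpace G X → OrbitSpace (G ⧸ N) (OrbitSpace ↥N X) :=
      Quotient.lift (fun x => Quotient.mk _ (Quotient.mk _ x)) Ψh with hΨ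
    have hli : Function.LeftInverse Ψ Φ := by
      intro p
      induction p using Quotient.inductionOn with
    | h q =>
        induction q using Quotient.inductionOn with
      | h x => rfl
    have hri : Function.RightInverse Ψ Φ := by
      intro p
      induction p using Quotient.inductionOn with
    | h x => rfl
    exact ⟨⟨⟨Φ, Ψ, hli, hri⟩,
      Continuous.quotient_lift (Continuous.quotient_lift continuous_quotient_mk' innerh) outerh,
      Continuous.quotient_lift (continuous_quotient_mk'.comp continuous_quotient_mk') Ψh⟩⟩
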